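/- arXiv:2309.09895 — 4 statements merged into one kernel-verified Lean document; each statement's English description precedes it below -/
import Mathlib

section
/- Let n ≥ 2 and let Ω ⊆ ℝ^n be a nonempty open connected set whose closure is contained in the complement of a non-degenerate solid cone C ⊂ ℝ^n. Let c : Ω → ℝ be continuous with c(x) ≥ 0 for all x ∈ Ω. Suppose u is continuous on the closure of Ω, twice continuously differentiable on Ω, and satisfies Δu(x) ≥ c(x)·u(x) for all x ∈ Ω, u(x) ≤ 0 for all x in the frontier of Ω, and sup_Ω u < +∞. Then u(x) ≤ 0 for all x ∈ Ω. -/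
/-!
With `r = ‖x - p‖` and `t = ⟪x - p, e⟫ / r`, the Laplacian of `r ^ μ * Φ t` is
`r ^ (μ - 2) * (μ (μ + n - 2) Φ - (n - 1) t Φ' + (1 - t²) Φ'')`. For
`Φ t = 2 - exp (γ (t - 1))` with `γ = n / (1 - cos² θ)` and `μ > 0` small, the bracket is negative
for `t ≤ cos θ`, so `w = r ^ μ Φ t` is a positive strict supersolution on the closure of `Ω`
which tends to `+∞` at infinity. If `u > ε w` somewhere, then `u - ε w` (bounded above minus
something tending to `+∞`) attains a positive maximum on the closure of `Ω`, at an interior point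
because `u ≤ 0 ≤ ε w` on the frontier; there `Δ (u - ε w) ≤ 0`, whereas
`Δ u ≥ c u ≥ 0 > ε Δ w`. Hence `u ≤ ε w` for every `ε > 0`, and `u ≤ 0`.
-/

open scoped RealInnerProductSpace

/-- The Euclidean Laplacian `Δu = ∑ i ∂²u/∂xᵢ²`. -/
noncomputable def laplacian {n : ℕ} (u : EuclideanSpace ℝ (Fin n) → ℝ)
    (x : EuclideanSpace ℝ (Fin n)) : ℝ :=
  ∑ i : Fin n, fderiv ℝ (fun y => fderiv ℝ u y (EuclideanSpace.single i 1)) x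
    (EuclideanSpace.single i 1)

open Filter Set Topology Real

theorem IsLocalMax.deriv_deriv_nonpos {f : ℝ → ℝ} {x : ℝ} (h : IsLocalMax f x)
    (hc : ContinuousAt f x) : deriv (deriv f) x ≤ 0 := by
  by_contra! hpos
  have hconst : f =ᶠ[𝓝 x] fun _ => f x :=
    ((isLocalMin_of_deriv_deriv_pos hpos h.deriv_eq_zero hc).and h).mono
      fun y hy => le_antisymm hy.2 hy.1
  have hderiv : deriv f =ᶠ[𝓝 x] fun _ => 0 :=
    hconst.eventuallyEq_nhds.mono fun y hy => by rw [hy.deriv_eq, deriv_const]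
  rw [hderiv.deriv_eq, deriv_const] at hpos
  exact hpos.false

theorem IsLocalMax.fderiv_fderiv_apply_nonpos {E : Type*} [NormedAddCommGroup E]
    [NormedSpace ℝ E] {f : E → ℝ} {x : E} (h : IsLocalMax f x) (hf : ContDiffAt ℝ 2 f x)
    (v : E) : fderiv ℝ (fun y => fderiv ℝ f y v) x v ≤ 0 := by
  let line : ℝ → E := fun s => x + s • v
  have hline : ∀ s, HasDerivAt line v s := fun s => by
    simpa only [id, one_smul] using ((hasDerivAt_id s).smul_const v).const_add x
  have hline0 : line 0 = x := by simp [line]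
  have hdiff : ∀ᶠ y in 𝓝 x, DifferentiableAt ℝ f y :=
    (hf.eventually (by simp)).mono fun y hy => hy.differentiableAt (by norm_num)
  have hfirst : deriv (f ∘ line) =ᶠ[𝓝 0] fun s => fderiv ℝ f (line s) v := by
    rw [← hline0] at hdiff
    filter_upwards [(hline 0).continuousAt.eventually hdiff] with s hs
    exact (hs.hasFDerivAt.comp_hasDerivAt s (hline s)).deriv
  have hsecond : HasDerivAt (fun s => fderiv ℝ f (line s) v)
      (fderiv ℝ (fun y => fderiv ℝ f y v) x v) 0 := by
    have hd : DifferentiableAt ℝ (fun y => fderiv ℝ f y v) x :=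
      ((hf.fderiv_right (m := 1) le_rfl).differentiableAt one_ne_zero).clm_apply
        (differentiableAt_const v)
    rw [← hline0] at hd ⊢
    exact hd.hasFDerivAt.comp_hasDerivAt 0 (hline 0)
  rw [← hline0] at h hf
  simpa only [hfirst.deriv_eq, hsecond.deriv] using
    (h.comp_continuous (hline 0).continuousAt).deriv_deriv_nonpos
      (hf.continuousAt.comp (hline 0).continuousAt)

theorem hasFDerivAt_inner_sub_const {E : Type*} [NormedAddCommGroup E] [InnerProductSpace ℝ E]
    (p v x : E) : HasFDerivAt (fun y => ⟪y - p, v⟫) (innerSL ℝ v) x := by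
  convert (innerSL ℝ v).hasFDerivAt.comp x ((hasFDerivAt_id x).sub_const p) using 1 <;>
    ext <;> simp [real_inner_comm]

section Laplacian

variable {n : ℕ}

local notation "𝔼" => EuclideanSpace ℝ (Fin n)

theorem IsLocalMax.laplacian_nonpos {f : 𝔼 → ℝ} {x : 𝔼} (h : IsLocalMax f x)
    (hf : ContDiffAt ℝ 2 f x) : laplacian f x ≤ 0 :=
  Finset.sum_nonpos fun _ _ => h.fderiv_fderiv_apply_nonpos hf _

theorem ContDiffAt.laplacian_eq_laplacian {f : 𝔼 → ℝ} {x : 𝔼} (hf : ContDiffAt ℝ 2 f x) :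
    laplacian f x = Laplacian.laplacian f x := by
  have hd : DifferentiableAt ℝ (fderiv ℝ f) x :=
    (hf.fderiv_right (m := 1) le_rfl).differentiableAt one_ne_zero
  rw [InnerProductSpace.laplacian_eq_iteratedFDeriv_orthonormalBasis f
    (EuclideanSpace.basisFun (Fin n) ℝ)]
  simp [laplacian, iteratedFDeriv_two_apply, fderiv_clm_apply hd (differentiableAt_const _)]

theorem ContDiffAt.laplacian_sub_const_mul {f g : 𝔼 → ℝ} {x : 𝔼} (hf : ContDiffAt ℝ 2 f x)
    (hg : ContDiffAt ℝ 2 g x) (c : ℝ) :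
    laplacian (fun y => f y - c * g y) x = laplacian f x - c * laplacian g x := by
  have hcg : ContDiffAt ℝ 2 (c • g) x := hg.const_smul c
  have hsub : ContDiffAt ℝ 2 (f - c • g) x := hf.sub hcg
  change laplacian (f - c • g) x = _
  rw [hsub.laplacian_eq_laplacian, hf.laplacian_sub hcg,
    InnerProductSpace.laplacian_smul c hg, hf.laplacian_eq_laplacian, hg.laplacian_eq_laplacian,
    smul_eq_mul]

theorem EuclideanSpace.sum_apply_single_mul_inner (L : 𝔼 →L[ℝ] ℝ) (v : 𝔼) :
    ∑ i, L (EuclideanSpace.single i 1) * ⟪v, EuclideanSpace.single i 1⟫ = L v := by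
  conv_rhs => rw [← (EuclideanSpace.basisFun (Fin n) ℝ).sum_repr' v]
  simp [map_sum, real_inner_comm, mul_comm]

theorem laplacian_eq_of_hasFDerivAt {f a b : 𝔼 → ℝ} {x p e : 𝔼}
    (hf : ∀ᶠ y in 𝓝 x, HasFDerivAt f (a y • innerSL ℝ (y - p) + b y • innerSL ℝ e) y)
    (ha : DifferentiableAt ℝ a x) (hb : DifferentiableAt ℝ b x) :
    laplacian f x = n * a x + fderiv ℝ a x (x - p) + fderiv ℝ b x e := by
  have hsecond : ∀ s : 𝔼, fderiv ℝ (fun y => fderiv ℝ f y s) x s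
      = fderiv ℝ a x s * ⟪x - p, s⟫ + a x * ‖s‖ ^ 2 + fderiv ℝ b x s * ⟪e, s⟫ := by
    intro s
    have hfirst : (fun y => fderiv ℝ f y s) =ᶠ[𝓝 x] fun y => a y * ⟪y - p, s⟫ + b y * ⟪e, s⟫ :=
      hf.mono fun y hy => by simp only [hy.fderiv, add_apply, smul_apply, innerSL_apply_apply,
        smul_eq_mul]
    have hd : HasFDerivAt (fun y => a y * ⟪y - p, s⟫ + b y * ⟪e, s⟫) _ x :=
      (ha.hasFDerivAt.mul (hasFDerivAt_inner_sub_const p s x)).add (hb.hasFDerivAt.mul_const _)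
    rw [hfirst.fderiv_eq, hd.fderiv]
    simp only [add_apply, smul_apply, innerSL_apply_apply, real_inner_self_eq_norm_sq,
      smul_eq_mul]
    ring
  simp only [laplacian, hsecond, PiLp.norm_single, norm_one, one_pow, mul_one,
    Finset.sum_add_distrib, EuclideanSpace.sum_apply_single_mul_inner, Finset.sum_const,
    Finset.card_univ, Fintype.card_fin, nsmul_eq_mul]
  ring

end Laplacian

section Axial

variable {E : Type*} [NormedAddCommGroup E] [InnerProductSpace ℝ E] {p e y : E}

/-- For `‖e‖ = 1` this is the cosine of the angle between `y - p` and the axis `e`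
(and `0` at `y = p`). -/
noncomputable def axialCos (p e y : E) : ℝ := ⟪y - p, e⟫ / ‖y - p‖

noncomputable def axialHomogeneous (k : ℝ) (Φ : ℝ → ℝ) (p e y : E) : ℝ :=
  ‖y - p‖ ^ k * Φ (axialCos p e y)

theorem abs_axialCos_le_one (he : ‖e‖ = 1) (p y : E) : |axialCos p e y| ≤ 1 := by
  rw [axialCos, abs_div, abs_norm]
  exact div_le_one_of_le₀ (by simpa [he] using abs_real_inner_le_norm (y - p) e) (norm_nonneg _)

theorem hasFDerivAt_norm_sub (hy : y ≠ p) :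
    HasFDerivAt (fun y => ‖y - p‖) (‖y - p‖⁻¹ • innerSL ℝ (y - p)) y := by
  have hr : ‖y - p‖ ≠ 0 := norm_ne_zero_iff.2 (sub_ne_zero.2 hy)
  have hsqrt := (Real.hasDerivAt_sqrt (pow_ne_zero 2 hr)).comp_hasFDerivAt y
    ((hasFDerivAt_sub_const p).norm_sq)
  simp only [Function.comp_def, Real.sqrt_sq (norm_nonneg _)] at hsqrt
  refine hsqrt.congr_fderiv ?_
  ext v
  simp only [one_div, mul_inv_rev, map_sub, ContinuousLinearMap.comp_id, smul_apply, sub_apply,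
    innerSL_apply_apply, nsmul_eq_mul, Nat.cast_ofNat, smul_eq_mul]
  field_simp

theorem hasFDerivAt_axialCos (hy : y ≠ p) :
    HasFDerivAt (axialCos p e)
      (‖y - p‖⁻¹ • (innerSL ℝ e - (axialCos p e y / ‖y - p‖) • innerSL ℝ (y - p))) y := by
  have hr : ‖y - p‖ ≠ 0 := norm_ne_zero_iff.2 (sub_ne_zero.2 hy)
  refine ((hasFDerivAt_inner_sub_const p e y).mul ((hasDerivAt_inv hr).comp_hasFDerivAt y
    (hasFDerivAt_norm_sub hy))).congr_fderiv ?_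
  ext v
  simp only [map_sub, neg_smul, smul_neg, add_apply, neg_apply, smul_apply, sub_apply,
    innerSL_apply_apply, smul_eq_mul, Function.comp_apply, axialCos]
  field_simp
  ring

theorem hasFDerivAt_axialHomogeneous (hy : y ≠ p) (k : ℝ) {Φ : ℝ → ℝ} {Φ' : ℝ}
    (hΦ : HasDerivAt Φ Φ' (axialCos p e y)) :
    HasFDerivAt (axialHomogeneous k Φ p e)
      ((‖y - p‖ ^ (k - 2) * (k * Φ (axialCos p e y) - axialCos p e y * Φ')) • innerSL ℝ (y - p)
        + (‖y - p‖ ^ (k - 1) * Φ') • innerSL ℝ e) y := by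
  have hr : 0 < ‖y - p‖ := norm_pos_iff.2 (sub_ne_zero.2 hy)
  refine (((Real.hasDerivAt_rpow_const (p := k) (Or.inl hr.ne')).comp_hasFDerivAt y
    (hasFDerivAt_norm_sub hy)).mul
      (hΦ.comp_hasFDerivAt y (hasFDerivAt_axialCos hy))).congr_fderiv ?_
  ext v
  simp only [add_apply, smul_apply, innerSL_apply_apply, sub_apply, smul_eq_mul,
    Function.comp_apply, Real.rpow_sub hr, Real.rpow_one, Real.rpow_two]
  field_simp
  ring

theorem fderiv_axialHomogeneous_apply_sub (hy : y ≠ p) (k : ℝ) {Φ : ℝ → ℝ} {Φ' : ℝ}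
    (hΦ : HasDerivAt Φ Φ' (axialCos p e y)) :
    fderiv ℝ (axialHomogeneous k Φ p e) y (y - p) = k * axialHomogeneous k Φ p e y := by
  have hr : 0 < ‖y - p‖ := norm_pos_iff.2 (sub_ne_zero.2 hy)
  rw [(hasFDerivAt_axialHomogeneous hy k hΦ).fderiv]
  simp only [add_apply, smul_apply, innerSL_apply_apply, smul_eq_mul, real_inner_self_eq_norm_sq,
    Real.rpow_sub hr, Real.rpow_one, Real.rpow_two, axialHomogeneous, axialCos,
    real_inner_comm e]
  field_simp
  ring

theorem fderiv_axialHomogeneous_apply_axis (he : ‖e‖ = 1) (hy : y ≠ p) (k : ℝ) {Φ : ℝ → ℝ}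
    {Φ' : ℝ} (hΦ : HasDerivAt Φ Φ' (axialCos p e y)) :
    fderiv ℝ (axialHomogeneous k Φ p e) y e = ‖y - p‖ ^ (k - 1) *
      (k * axialCos p e y * Φ (axialCos p e y) + (1 - axialCos p e y ^ 2) * Φ') := by
  have hr : 0 < ‖y - p‖ := norm_pos_iff.2 (sub_ne_zero.2 hy)
  rw [(hasFDerivAt_axialHomogeneous hy k hΦ).fderiv]
  simp only [add_apply, smul_apply, innerSL_apply_apply, smul_eq_mul, real_inner_self_eq_norm_sq,
    he, Real.rpow_sub hr, Real.rpow_one, Real.rpow_two, axialCos]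
  field_simp
  ring

theorem contDiffAt_axialHomogeneous {k : ℝ} {Φ : ℝ → ℝ} {m : WithTop ℕ∞} (hΦ : ContDiff ℝ m Φ)
    (hy : y ≠ p) : ContDiffAt ℝ m (axialHomogeneous k Φ p e) y := by
  have hr : ‖y - p‖ ≠ 0 := norm_ne_zero_iff.2 (sub_ne_zero.2 hy)
  have hsub : ContDiffAt ℝ m (fun y : E => y - p) y := contDiffAt_id.sub contDiffAt_const
  have hnorm : ContDiffAt ℝ m (fun y => ‖y - p‖) y :=
    (contDiffAt_norm ℝ (sub_ne_zero.2 hy)).comp y hsub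
  exact (hnorm.rpow_const_of_ne hr).mul
    (hΦ.contDiffAt.comp y ((hsub.inner ℝ contDiffAt_const).div hnorm hr))

theorem tendsto_axialHomogeneous_cocompact [ProperSpace E] {k : ℝ} {Φ : ℝ → ℝ} (he : ‖e‖ = 1)
    (hk : 0 < k) (hΦ : ∀ s, |s| ≤ 1 → 1 ≤ Φ s) :
    Tendsto (axialHomogeneous k Φ p e) (cocompact E) atTop := by
  have hdist : Tendsto (fun y => ‖y - p‖) (cocompact E) atTop :=
    tendsto_atTop_mono (fun y => by simpa using norm_sub_norm_le y p)
      (tendsto_atTop_add_const_right _ (-‖p‖) tendsto_norm_cocompact_atTop)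
  refine tendsto_atTop_mono (fun y => ?_) ((tendsto_rpow_atTop hk).comp hdist)
  exact le_mul_of_one_le_right (rpow_nonneg (norm_nonneg _) k)
    (hΦ _ (abs_axialCos_le_one he p y))

end Axial

section Barrier

variable {n : ℕ} {p e y : EuclideanSpace ℝ (Fin n)} {T : ℝ}

theorem laplacian_axialHomogeneous (he : ‖e‖ = 1) (hy : y ≠ p) (k : ℝ) {Φ Φ' Φ'' : ℝ → ℝ}
    (hΦ : ∀ s, HasDerivAt Φ (Φ' s) s) (hΦ' : ∀ s, HasDerivAt Φ' (Φ'' s) s) :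
    laplacian (axialHomogeneous k Φ p e) y = ‖y - p‖ ^ (k - 2) *
      (k * (k + n - 2) * Φ (axialCos p e y) - (n - 1) * axialCos p e y * Φ' (axialCos p e y)
        + (1 - axialCos p e y ^ 2) * Φ'' (axialCos p e y)) := by
  set A : ℝ → ℝ := fun s => k * Φ s - s * Φ' s
  have hA : ∀ s, HasDerivAt A (k * Φ' s - (1 * Φ' s + s * Φ'' s)) s := fun s =>
    ((hΦ s).const_mul k).sub ((hasDerivAt_id s).mul (hΦ' s))
  have hgrad : ∀ᶠ z in 𝓝 y, HasFDerivAt (axialHomogeneous k Φ p e)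
      (axialHomogeneous (k - 2) A p e z • innerSL ℝ (z - p)
        + axialHomogeneous (k - 1) Φ' p e z • innerSL ℝ e) z :=
    (isOpen_compl_singleton.eventually_mem hy).mono fun z hz =>
      hasFDerivAt_axialHomogeneous hz k (hΦ _)
  rw [laplacian_eq_of_hasFDerivAt hgrad
      (hasFDerivAt_axialHomogeneous hy _ (hA _)).differentiableAt
      (hasFDerivAt_axialHomogeneous hy _ (hΦ' _)).differentiableAt,
    fderiv_axialHomogeneous_apply_sub hy _ (hA _),
    fderiv_axialHomogeneous_apply_axis he hy _ (hΦ' _), sub_sub, one_add_one_eq_two]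
  simp only [axialHomogeneous, A]
  ring

theorem one_le_mul_one_sub_sq_sub_mul (hn : 2 ≤ n) {γ t : ℝ} (hT : T < 1)
    (hγ : γ * (1 - T ^ 2) = n) (ht : t ∈ Icc (-1) T) :
    1 ≤ γ * (1 - t ^ 2) - (n - 1) * t := by
  obtain ⟨ht₁, ht₂⟩ := ht
  have hn' : (2 : ℝ) ≤ n := by exact_mod_cast hn
  have hT' : -1 < T := by
    rcases (ht₁.trans ht₂).lt_or_eq with h | h
    · exact h
    · subst h; norm_num at hγ; linarith
  have hγ0 : 0 < γ := by nlinarith [mul_pos (sub_pos.2 hT) (neg_lt_iff_pos_add'.1 hT')]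
  have hchord : γ * (1 - T) * (1 + t) ≤ γ * (1 - t ^ 2) := by
    nlinarith [mul_nonneg (mul_nonneg hγ0.le (by linarith : 0 ≤ t + 1)) (by linarith : 0 ≤ T - t)]
  have hline : (n - 1) * t + 1 ≤ γ * (1 - T) * (1 + t) := by
    refine le_of_sub_nonneg (nonneg_of_mul_nonneg_left (b := 1 + T) ?_ (by linarith))
    have htT : t * T ≤ 1 := by nlinarith
    nlinarith [mul_nonneg (by linarith : (0:ℝ) ≤ n - 2) (by linarith : 0 ≤ 1 - t * T),
      mul_nonneg (by linarith : 0 ≤ 1 + t) (by linarith : 0 ≤ 1 - T)]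
  linarith

theorem exists_barrier_of_axialCos_le (hn : 2 ≤ n) (he : ‖e‖ = 1) (hT₀ : -1 < T) (hT₁ : T < 1) :
    ∃ w : EuclideanSpace ℝ (Fin n) → ℝ, (∀ y ≠ p, ContDiffAt ℝ 2 w y) ∧ (∀ y, 0 ≤ w y) ∧
      Tendsto w (cocompact _) atTop ∧ ∀ y ≠ p, axialCos p e y ≤ T → laplacian w y < 0 := by
  have hn' : (2 : ℝ) ≤ n := by exact_mod_cast hn
  have h1T : 0 < 1 - T ^ 2 := by nlinarith
  set γ : ℝ := n / (1 - T ^ 2)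
  have hγ : γ * (1 - T ^ 2) = n := div_mul_cancel₀ _ h1T.ne'
  have hγn : (n : ℝ) ≤ γ := le_div_self (by positivity) h1T (by nlinarith)
  set δ := exp (-2 * γ)
  have hδ : 0 < δ := exp_pos _
  have hδ1 : δ ≤ 1 := exp_le_one_iff.2 (by linarith)
  set μ := δ / (2 * n)
  have hμ : 0 < μ := by positivity
  have hμn : 2 * n * μ = δ := by simp only [μ]; field_simp
  set Φ : ℝ → ℝ := fun s => 2 - exp (γ * (s - 1))
  have hΦ : ∀ s, HasDerivAt Φ (-(γ * exp (γ * (s - 1)))) s := fun s =>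
    ((((hasDerivAt_id s).sub_const 1).const_mul γ).exp.const_sub 2).congr_deriv (by simp [mul_comm])
  have hΦ' : ∀ s, HasDerivAt (fun s => -(γ * exp (γ * (s - 1))))
      (-(γ * (γ * exp (γ * (s - 1))))) s := fun s =>
    ((((hasDerivAt_id s).sub_const 1).const_mul γ).exp.const_mul γ).neg.congr_deriv
      (by simp [mul_comm])
  have hΦ_ge : ∀ s, |s| ≤ 1 → 1 ≤ Φ s := fun s hs => by
    have : exp (γ * (s - 1)) ≤ 1 := exp_le_one_iff.2 (by nlinarith [le_of_abs_le hs])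
    simp only [Φ]
    linarith
  refine ⟨axialHomogeneous μ Φ p e, fun y hy => contDiffAt_axialHomogeneous (by fun_prop) hy,
    fun y => mul_nonneg (rpow_nonneg (norm_nonneg _) _)
      (zero_le_one.trans (hΦ_ge _ (abs_axialCos_le_one he p y))),
    tendsto_axialHomogeneous_cocompact he hμ hΦ_ge, fun y hy hyT => ?_⟩
  rw [laplacian_axialHomogeneous he hy μ hΦ hΦ']
  refine mul_neg_of_pos_of_neg (rpow_pos_of_pos (norm_pos_iff.2 (sub_ne_zero.2 hy)) _) ?_
  set t := axialCos p e y
  have ht : -1 ≤ t := neg_le_of_abs_le (abs_axialCos_le_one he p y)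
  have hg := one_le_mul_one_sub_sq_sub_mul hn hT₁ hγ ⟨ht, hyT⟩
  have hE : δ ≤ exp (γ * (t - 1)) := exp_le_exp.2 (by nlinarith)
  have hΦ2 : Φ t ≤ 2 := by simp only [Φ]; linarith [exp_pos (γ * (t - 1))]
  have hcoef : μ * (μ + n - 2) * Φ t ≤ δ := by
    have : μ ≤ 1 := by
      rw [div_le_one (by positivity)]; linarith
    nlinarith [mul_nonneg hμ.le (by linarith : (0:ℝ) ≤ μ + n - 2),
      hΦ_ge t (abs_axialCos_le_one he p y)]
  nlinarith [mul_le_mul_of_nonneg_left hg (by positivity : 0 ≤ γ * exp (γ * (t - 1)))]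

end Barrier

section MaximumPrinciple

variable {n : ℕ} {Ω : Set (EuclideanSpace ℝ (Fin n))} {c u w : EuclideanSpace ℝ (Fin n) → ℝ}

theorem le_mul_of_barrier (hΩ : IsOpen Ω) (hc : ∀ x ∈ Ω, 0 ≤ c x)
    (hu_cont : ContinuousOn u (closure Ω)) (hu_reg : ContDiffOn ℝ 2 u Ω)
    (hu_sub : ∀ x ∈ Ω, c x * u x ≤ laplacian u x) (hu_bdry : ∀ x ∈ frontier Ω, u x ≤ 0)
    (hu_bdd : BddAbove (u '' Ω)) (hw_cont : ContinuousOn w (closure Ω))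
    (hw_reg : ∀ x ∈ Ω, ContDiffAt ℝ 2 w x) (hw_nonneg : ∀ x ∈ closure Ω, 0 ≤ w x)
    (hw_lap : ∀ x ∈ Ω, laplacian w x < 0) (hw_top : Tendsto w (cocompact _ ⊓ 𝓟 (closure Ω)) atTop)
    {ε : ℝ} (hε : 0 < ε) : ∀ x ∈ Ω, u x ≤ ε * w x := by
  intro x₀ hx₀
  by_contra! hlt
  set h := fun y => u y - ε * w y
  obtain ⟨M, hM⟩ : ∃ M, ∀ y ∈ closure Ω, u y ≤ M := by
    obtain ⟨M, hM⟩ := hu_bdd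
    refine ⟨max M 0, fun y hy => ?_⟩
    rcases (closure_eq_self_union_frontier Ω ▸ hy) with hy | hy
    · exact (hM ⟨y, hy, rfl⟩).trans (le_max_left _ _)
    · exact (hu_bdry y hy).trans (le_max_right _ _)
  have hfar : ∀ᶠ y in cocompact _ ⊓ 𝓟 (closure Ω), h y ≤ h x₀ := by
    filter_upwards [hw_top.eventually_ge_atTop ((M - h x₀) / ε),
      inf_le_right (α := Filter _) (mem_principal_self (closure Ω))] with y hy hyΩ
    rw [div_le_iff₀ hε] at hy
    linarith [hM y hyΩ]
  obtain ⟨z, hz, hzmax⟩ := (hu_cont.sub (continuousOn_const.mul hw_cont)).exists_isMaxOn'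
    isClosed_closure (subset_closure hx₀) hfar
  have hhz : 0 < h z := (sub_pos.2 hlt).trans_le (hzmax (subset_closure hx₀))
  have hzΩ : z ∈ Ω := by
    by_contra hzΩ
    have := hu_bdry z (hΩ.frontier_eq ▸ ⟨hz, hzΩ⟩)
    nlinarith [hw_nonneg z hz]
  have hmax : IsLocalMax h z :=
    hzmax.isLocalMax (mem_of_superset (hΩ.mem_nhds hzΩ) subset_closure)
  have huz : ContDiffAt ℝ 2 u z := hu_reg.contDiffAt (hΩ.mem_nhds hzΩ)
  have hlap := hmax.laplacian_nonpos (huz.sub (contDiffAt_const.mul (hw_reg z hzΩ)))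
  rw [huz.laplacian_sub_const_mul (hw_reg z hzΩ)] at hlap
  have hcu : 0 ≤ c z * u z := mul_nonneg (hc z hzΩ) (by nlinarith [hw_nonneg z hz])
  nlinarith [hu_sub z hzΩ, hw_lap z hzΩ]

theorem nonpos_of_barrier (hΩ : IsOpen Ω) (hc : ∀ x ∈ Ω, 0 ≤ c x)
    (hu_cont : ContinuousOn u (closure Ω)) (hu_reg : ContDiffOn ℝ 2 u Ω)
    (hu_sub : ∀ x ∈ Ω, c x * u x ≤ laplacian u x) (hu_bdry : ∀ x ∈ frontier Ω, u x ≤ 0)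
    (hu_bdd : BddAbove (u '' Ω)) (hw_cont : ContinuousOn w (closure Ω))
    (hw_reg : ∀ x ∈ Ω, ContDiffAt ℝ 2 w x) (hw_nonneg : ∀ x ∈ closure Ω, 0 ≤ w x)
    (hw_lap : ∀ x ∈ Ω, laplacian w x < 0) (hw_top : Tendsto w (cocompact _ ⊓ 𝓟 (closure Ω)) atTop) :
    ∀ x ∈ Ω, u x ≤ 0 := by
  intro x hx
  have hlim : Tendsto (fun ε => ε * w x) (𝓝[>] 0) (𝓝 0) := by
    simpa using tendsto_nhdsWithin_of_tendsto_nhds ((tendsto_id (x := 𝓝 (0 : ℝ))).mul_const (w x))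
  exact ge_of_tendsto hlim (eventually_nhdsWithin_of_forall fun ε hε =>
    le_mul_of_barrier hΩ hc hu_cont hu_reg hu_sub hu_bdry hu_bdd hw_cont hw_reg hw_nonneg hw_lap
      hw_top hε x hx)

end MaximumPrinciple

theorem maximum_principle_complement_of_cone_general
    (n : ℕ) (hn : 2 ≤ n)
    (Ω : Set (EuclideanSpace ℝ (Fin n)))
    (hΩopen : IsOpen Ω)
    (p e : EuclideanSpace ℝ (Fin n)) (θ : ℝ)
    (he : ‖e‖ = 1) (hθ₀ : 0 < θ) (hθ₁ : θ ≤ Real.pi / 2)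
    -- the closure of Ω is contained in the complement of the cone
    -- C = {x : ⟨x − p, e⟩ ≥ ‖x − p‖·cos θ}
    (hcone : ∀ x ∈ closure Ω, ⟪x - p, e⟫ < ‖x - p‖ * Real.cos θ)
    (c : EuclideanSpace ℝ (Fin n) → ℝ)
    (hc_nonneg : ∀ x ∈ Ω, 0 ≤ c x)
    (u : EuclideanSpace ℝ (Fin n) → ℝ)
    (hu_cont : ContinuousOn u (closure Ω))
    (hu_reg : ContDiffOn ℝ 2 u Ω)
    (hu_sub : ∀ x ∈ Ω, c x * u x ≤ laplacian u x)
    (hu_bdry : ∀ x ∈ frontier Ω, u x ≤ 0)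
    (hu_bdd : BddAbove (u '' Ω)) :
    ∀ x ∈ Ω, u x ≤ 0 := by
  have hT₀ : -1 < Real.cos θ := by
    linarith [Real.cos_nonneg_of_neg_pi_div_two_le_of_le (by linarith) hθ₁]
  have hT₁ : Real.cos θ < 1 := by
    simpa using Real.cos_lt_cos_of_nonneg_of_le_pi_div_two le_rfl hθ₁ hθ₀
  have hp : ∀ y ∈ closure Ω, y ≠ p := fun y hy hyp => by simpa [hyp] using hcone y hy
  have hcos : ∀ y ∈ closure Ω, axialCos p e y ≤ Real.cos θ := fun y hy => by
    rw [axialCos, div_le_iff₀ (norm_pos_iff.2 (sub_ne_zero.2 (hp y hy)))]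
    linarith [hcone y hy]
  obtain ⟨w, hw_reg, hw_nonneg, hw_top, hw_lap⟩ :=
    exists_barrier_of_axialCos_le (p := p) hn he hT₀ hT₁
  exact nonpos_of_barrier hΩopen hc_nonneg hu_cont hu_reg hu_sub hu_bdry hu_bdd
    (fun y hy => (hw_reg y (hp y hy)).continuousAt.continuousWithinAt)
    (fun y hy => hw_reg y (hp y (subset_closure hy))) (fun y _ => hw_nonneg y)
    (fun y hy => hw_lap y (hp y (subset_closure hy)) (hcos y (subset_closure hy)))
    (hw_top.mono_left inf_le_left)

/-- Maximum principle in Euclidean domains contained in the complement of a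
non-degenerate solid cone. -/
theorem maximum_principle_complement_of_cone
    (n : ℕ) (hn : 2 ≤ n)
    (Ω : Set (EuclideanSpace ℝ (Fin n)))
    (hΩopen : IsOpen Ω) (hΩconn : IsConnected Ω)
    (p e : EuclideanSpace ℝ (Fin n)) (θ : ℝ)
    (he : ‖e‖ = 1) (hθ₀ : 0 < θ) (hθ₁ : θ ≤ Real.pi / 2)
    -- the closure of Ω is contained in the complement of the cone
    -- C = {x : ⟨x − p, e⟩ ≥ ‖x − p‖·cos θ}
    (hcone : ∀ x ∈ closure Ω, ⟪x - p, e⟫ < ‖x - p‖ * Real.cos θ)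
    (c : EuclideanSpace ℝ (Fin n) → ℝ)
    (hc_cont : ContinuousOn c Ω) (hc_nonneg : ∀ x ∈ Ω, 0 ≤ c x)
    (u : EuclideanSpace ℝ (Fin n) → ℝ)
    (hu_cont : ContinuousOn u (closure Ω))
    (hu_reg : ContDiffOn ℝ 2 u Ω)
    (hu_sub : ∀ x ∈ Ω, c x * u x ≤ laplacian u x)
    (hu_bdry : ∀ x ∈ frontier Ω, u x ≤ 0)
    (hu_bdd : BddAbove (u '' Ω)) :
    ∀ x ∈ Ω, u x ≤ 0 :=
  maximum_principle_complement_of_cone_general n hn Ω hΩopen p e θ he hθ₀ hθ₁ hcone c hc_nonneg u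
    hu_cont hu_reg hu_sub hu_bdry hu_bdd
end

section
/- Let σ : ℝ → ℝ be a smooth function with σ(r) > 0 for all r ≥ 0, let A ≥ 0, and suppose σ''(r) ≤ 0 for all r ≥ A and σ(r) converges, as r → +∞, to some c ∈ (0, +∞). Then σ'(r) ≥ 0 for every r ≥ A, and for every real λ > 0 and every integer m ≥ 1 there exists β ∈ (0, 1) such that the function h(r) = r^β satisfies the differential inequality h''(r) + (m−1)·(σ'(r)/σ(r))·h'(r) − (λ/σ(r)²)·h(r) ≤ 0 for all r ≥ max(A, 1). -/
open Filter Set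

set_option maxHeartbeats 1000000


/-- Radial barrier ODE lemma, case `σ'' ≤ 0` eventually and `σ → c ∈ (0, ∞)`:
then `σ' ≥ 0` eventually, and for some `β ∈ (0,1)` the function `h(r) = r^β` satisfies
`h'' + (m−1)(σ'/σ)h' − (λ/σ²)h ≤ 0` for `r ≥ max A 1`. -/
theorem barrier_concave_finite_positive_limit
    (σ : ℝ → ℝ) (hσ : ContDiff ℝ (⊤ : ℕ∞) σ) (hσpos : ∀ r ≥ (0:ℝ), 0 < σ r)
    (A : ℝ) (hA : 0 ≤ A)
    (hσ'' : ∀ r ≥ A, deriv (deriv σ) r ≤ 0)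
    (c : ℝ) (hc : 0 < c)
    (hlim : Filter.Tendsto σ Filter.atTop (nhds c)) :
    (∀ r ≥ A, 0 ≤ deriv σ r) ∧
    (∀ lam : ℝ, 0 < lam → ∀ m : ℕ, 1 ≤ m → ∃ β ∈ Set.Ioo (0:ℝ) 1, ∀ r ≥ max A 1,
      deriv (deriv (fun s : ℝ => s ^ β)) r
        + ((m : ℝ) - 1) * (deriv σ r / σ r) * deriv (fun s : ℝ => s ^ β) r
        - (lam / (σ r) ^ 2) * ((fun s : ℝ => s ^ β) r) ≤ 0) := by
  have hσtop : ContDiff ℝ (⊤ : ℕ∞) σ := hσ.of_le (by simp)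
  have hσdiff : Differentiable ℝ σ := hσtop.differentiable (by simp)
  have hσ'cd : ContDiff ℝ (⊤ : ℕ∞) (deriv σ) := (contDiff_infty_iff_deriv.mp hσtop).2
  have hσ'diff : Differentiable ℝ (deriv σ) := hσ'cd.differentiable (by simp)
  -- deriv σ is antitone on [A, ∞)
  have hanti : AntitoneOn (deriv σ) (Set.Ici A) := by
    apply antitoneOn_of_deriv_nonpos (convex_Ici A) (hσ'diff.continuous.continuousOn)
      (hσ'diff.differentiableOn)
    intro x hx
    rw [interior_Ici] at hx
    exact hσ'' x (le_of_lt hx)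
  -- σ' ≥ 0 on [A, ∞)
  have hσ'nonneg : ∀ r ≥ A, 0 ≤ deriv σ r := by
    intro r0 hr0
    by_contra hneg
    push_neg at hneg
    set d := deriv σ r0 with hd
    -- g = σ - d * id is antitone on [r0, ∞)
    have hgdiff : Differentiable ℝ (fun r => σ r - d * r) :=
      hσdiff.sub (differentiable_id.const_mul d)
    have hgderiv : ∀ x : ℝ, deriv (fun r => σ r - d * r) x = deriv σ x - d := by
      intro x
      have hD : HasDerivAt (fun r => σ r - d * r) (deriv σ x - d) x :=
        (hσdiff x).hasDerivAt.sub (by simpa using (hasDerivAt_id x).const_mul d)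
      exact hD.deriv
    have hg : AntitoneOn (fun r => σ r - d * r) (Set.Ici r0) := by
      refine antitoneOn_of_deriv_nonpos (convex_Ici r0) (hgdiff.continuous.continuousOn)
        (hgdiff.differentiableOn) ?_
      intro x hx
      rw [interior_Ici] at hx
      rw [hgderiv x, sub_nonpos]
      exact hanti (Set.mem_Ici.mpr hr0) (Set.mem_Ici.mpr (hr0.trans hx.le)) hx.le
    -- hence σ r ≤ σ r0 + d * (r - r0) → -∞
    have hbound : ∀ r ≥ r0, σ r ≤ σ r0 - d * r0 + d * r := by
      intro r hr
      have h := hg (Set.self_mem_Ici) (Set.mem_Ici.mpr hr) hr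
      dsimp only at h
      linarith
    have hlin : Tendsto (fun r => σ r0 - d * r0 + d * r) atTop atBot :=
      tendsto_atBot_add_const_left atTop _
        ((tendsto_const_mul_atBot_of_neg hneg).mpr tendsto_id)
    have h1 : ∀ᶠ r in atTop, σ r ≤ c - 1 := by
      filter_upwards [eventually_ge_atTop r0, hlin.eventually (eventually_le_atBot (c - 1))]
        with r hr hr2
      exact (hbound r hr).trans hr2
    have h2 : ∀ᶠ r in atTop, c - 1 < σ r :=
      hlim.eventually (eventually_gt_nhds (by linarith))
    obtain ⟨r, hr1, hr2⟩ := (h1.and h2).exists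
    linarith
  refine ⟨hσ'nonneg, ?_⟩
  -- σ is monotone on [A, ∞)
  have hmono : MonotoneOn σ (Set.Ici A) := by
    apply monotoneOn_of_deriv_nonneg (convex_Ici A) (hσdiff.continuous.continuousOn)
      (hσdiff.differentiableOn)
    intro x hx
    rw [interior_Ici] at hx
    exact hσ'nonneg x hx.le
  have hσA : 0 < σ A := hσpos A hA
  -- σ r ≤ c on [A,∞)
  have hle_c : ∀ r ≥ A, σ r ≤ c := by
    intro r hr
    refine ge_of_tendsto hlim ?_
    filter_upwards [eventually_ge_atTop r] with s hs
    exact hmono (Set.mem_Ici.mpr hr) (Set.mem_Ici.mpr (hr.trans hs)) hs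
  -- key: σ'(r) * (r - A) ≤ σ r - σ A
  have hkey : ∀ r ≥ A, deriv σ r * (r - A) ≤ σ r - σ A := by
    intro r hr
    rcases eq_or_lt_of_le hr with h | h
    · simp [← h]
    have hgdiff : Differentiable ℝ (fun s => σ s - deriv σ r * s) :=
      hσdiff.sub (differentiable_id.const_mul _)
    have hmon : MonotoneOn (fun s => σ s - deriv σ r * s) (Set.Icc A r) := by
      refine monotoneOn_of_deriv_nonneg (convex_Icc A r) (hgdiff.continuous.continuousOn)
        (hgdiff.differentiableOn) ?_
      intro x hx
      rw [interior_Icc] at hx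
      have hD : HasDerivAt (fun s => σ s - deriv σ r * s) (deriv σ x - deriv σ r) x :=
        (hσdiff x).hasDerivAt.sub (by simpa using (hasDerivAt_id x).const_mul (deriv σ r))
      rw [hD.deriv, sub_nonneg]
      exact hanti (Set.mem_Ici.mpr hx.1.le) (Set.mem_Ici.mpr hr) hx.2.le
    have h := hmon (Set.left_mem_Icc.mpr hr) (Set.right_mem_Icc.mpr hr) hr
    dsimp only at h
    nlinarith [h]
  set K : ℝ := (c + A * deriv σ A) / σ A with hK
  have hσ'A : 0 ≤ deriv σ A := hσ'nonneg A le_rfl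
  have hK0 : 0 ≤ K := div_nonneg (by nlinarith) hσA.le
  -- bound: (σ'/σ) * r ≤ K for r ≥ max A 1
  have hKbound : ∀ r ≥ max A 1, deriv σ r / σ r * r ≤ K := by
    intro r hr
    have hrA : A ≤ r := (le_max_left A 1).trans hr
    have hr1 : (1:ℝ) ≤ r := (le_max_right A 1).trans hr
    have hσr : σ A ≤ σ r := hmono Set.self_mem_Ici (Set.mem_Ici.mpr hrA) hrA
    have h1 : deriv σ r * r ≤ c + A * deriv σ A := by
      have h2 := hkey r hrA
      have h3 : σ r - σ A ≤ c := by have := hle_c r hrA; linarith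
      have h4 : deriv σ r ≤ deriv σ A := hanti Set.self_mem_Ici (Set.mem_Ici.mpr hrA) hrA
      nlinarith [hσ'nonneg r hrA]
    rw [div_mul_eq_mul_div, hK]
    apply div_le_div₀ (by nlinarith) h1 hσA hσr
  rintro lam hlam m hm
  set B : ℝ := ((m : ℝ) - 1) * K + 1 with hB
  have hm1 : (1:ℝ) ≤ (m:ℝ) := by exact_mod_cast hm
  have hB1 : (1:ℝ) ≤ B := by nlinarith
  set β : ℝ := min (1/2) (lam / (c ^ 2 * B)) with hβ
  have hc2 : (0:ℝ) < c ^ 2 := by positivity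
  have hβpos : 0 < β := lt_min (by norm_num) (div_pos hlam (by positivity))
  have hβlt1 : β < 1 := lt_of_le_of_lt (min_le_left _ _) (by norm_num)
  refine ⟨β, ⟨hβpos, hβlt1⟩, ?_⟩
  intro r hr
  have hrA : A ≤ r := (le_max_left A 1).trans hr
  have hr1 : (1:ℝ) ≤ r := (le_max_right A 1).trans hr
  have hrpos : (0:ℝ) < r := lt_of_lt_of_le one_pos hr1
  have hσr : 0 < σ r := hσpos r (hA.trans hrA)
  -- derivatives of r ^ β
  have hd1 : deriv (fun s : ℝ => s ^ β) r = β * r ^ (β - 1) := by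
    rw [Real.deriv_rpow_const r β]
  have hev : deriv (fun s : ℝ => s ^ β) =ᶠ[nhds r] fun x => β * x ^ (β - 1) := by
    filter_upwards [isOpen_Ioi.eventually_mem (Set.mem_Ioi.mpr hrpos)] with x hx
    rw [Real.deriv_rpow_const x β]
  have hd2 : deriv (deriv (fun s : ℝ => s ^ β)) r = β * ((β - 1) * r ^ (β - 2)) := by
    rw [hev.deriv_eq, deriv_const_mul _ (Real.differentiableAt_rpow_const_of_ne _ hrpos.ne'),
      Real.deriv_rpow_const r (β - 1)]
    ring_nf
  rw [hd1, hd2]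
  simp only
  -- rewrite powers in terms of t = r ^ (β - 2)
  set t : ℝ := r ^ (β - 2) with ht
  have htpos : 0 < t := Real.rpow_pos_of_pos hrpos _
  have hp1 : r ^ (β - 1) = t * r := by
    rw [ht, show β - 1 = (β - 2) + 1 by ring, Real.rpow_add hrpos, Real.rpow_one]
  have hp2 : r ^ β = t * (r * r) := by
    rw [ht, show β = (β - 2) + 1 + 1 by ring, Real.rpow_add hrpos, Real.rpow_add hrpos,
      Real.rpow_one]
    ring
  rw [hp1, hp2]
  -- component bounds
  have hX : β * (β - 1) ≤ 0 := mul_nonpos_of_nonneg_of_nonpos hβpos.le (by linarith)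
  have hY : β * (((m:ℝ) - 1) * (deriv σ r / σ r * r)) ≤ lam / c ^ 2 := by
    have h1 : ((m:ℝ) - 1) * (deriv σ r / σ r * r) ≤ ((m:ℝ) - 1) * K :=
      mul_le_mul_of_nonneg_left (hKbound r hr) (by linarith)
    have h2 : β ≤ lam / (c ^ 2 * B) := min_le_right _ _
    have h3 : β * B ≤ lam / c ^ 2 := by
      rw [div_mul_eq_div_div] at h2
      calc β * B ≤ (lam / c ^ 2 / B) * B := by
            apply mul_le_mul_of_nonneg_right h2 (by linarith)
        _ = lam / c ^ 2 := div_mul_cancel₀ _ (by positivity)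
    calc β * (((m:ℝ) - 1) * (deriv σ r / σ r * r)) ≤ β * (((m:ℝ) - 1) * K) :=
          mul_le_mul_of_nonneg_left h1 hβpos.le
      _ ≤ β * B := by nlinarith
      _ ≤ lam / c ^ 2 := h3
  have hZ : lam / c ^ 2 ≤ lam / σ r ^ 2 * (r * r) := by
    have hσc : σ r ≤ c := hle_c r hrA
    have h1 : lam / c ^ 2 ≤ lam / σ r ^ 2 :=
      div_le_div_of_nonneg_left hlam.le (pow_pos hσr 2) (by nlinarith)
    have h2 : lam / σ r ^ 2 * 1 ≤ lam / σ r ^ 2 * (r * r) :=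
      mul_le_mul_of_nonneg_left (by nlinarith) (by positivity)
    linarith
  have hTY := mul_le_mul_of_nonneg_left hY htpos.le
  have hTZ := mul_le_mul_of_nonneg_left hZ htpos.le
  have hTX : t * (β * (β - 1)) ≤ 0 := mul_nonpos_of_nonneg_of_nonpos htpos.le hX
  nlinarith [hTY, hTZ, hTX]
end

section
/- Let σ : ℝ → ℝ be a smooth function with σ(r) > 0 for all r ≥ 0, let A ≥ 0, and suppose σ''(r) ≤ 0 for all r ≥ A and σ(r) → +∞ as r → +∞. Then 0 < σ'(r) ≤ σ'(A) for all r ≥ A, and for every real λ > 0 and every integer m ≥ 2 there exists β > 0 such that the function h(r) = σ(r)^β satisfies the differential inequality h''(r) + (m−1)·(σ'(r)/σ(r))·h'(r) − (λ/σ(r)²)·h(r) ≤ 0 for all r ≥ A; moreover h(r) > 0 for r ≥ A and h(r) → +∞ as r → +∞. -/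
open Filter Set ContDiff

private lemma barrier_field_aux (s t p q b mm lam : ℝ) (hs : s ≠ 0) :
    (q * b) * (t / s) + (p * b) * (p * (b - 1) * (t / s ^ 2))
        + (mm - 1) * (p / s) * (p * b * (t / s))
        - (lam / s ^ 2) * t
        = (t / s ^ 2) * (b * (b - 1) * p ^ 2 + b * s * q + (mm - 1) * b * p ^ 2 - lam) := by
  field_simp
  ring

/-- Radial barrier ODE lemma, case `σ'' ≤ 0` eventually and `σ → +∞`:
then `0 < σ' ≤ σ'(A)` on `[A, ∞)`, and for some `β > 0` the function `h(r) = σ(r)^β`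
satisfies `h'' + (m−1)(σ'/σ)h' − (λ/σ²)h ≤ 0` on `[A, ∞)`, is positive there,
and diverges at infinity. -/
theorem barrier_concave_divergent
    (σ : ℝ → ℝ) (hσ : ContDiff ℝ (⊤ : ℕ∞) σ) (hσpos : ∀ r ≥ (0:ℝ), 0 < σ r)
    (A : ℝ) (hA : 0 ≤ A)
    (hσ'' : ∀ r ≥ A, deriv (deriv σ) r ≤ 0)
    (hlim : Filter.Tendsto σ Filter.atTop Filter.atTop) :
    (∀ r ≥ A, 0 < deriv σ r ∧ deriv σ r ≤ deriv σ A) ∧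
    (∀ lam : ℝ, 0 < lam → ∀ m : ℕ, 2 ≤ m → ∃ β > (0:ℝ),
      (∀ r ≥ A,
        deriv (deriv (fun s : ℝ => σ s ^ β)) r
          + ((m : ℝ) - 1) * (deriv σ r / σ r) * deriv (fun s : ℝ => σ s ^ β) r
          - (lam / (σ r) ^ 2) * (σ r ^ β) ≤ 0) ∧
      (∀ r ≥ A, 0 < σ r ^ β) ∧
      Filter.Tendsto (fun r : ℝ => σ r ^ β) Filter.atTop Filter.atTop) := by
  have hσdiff : Differentiable ℝ σ := hσ.differentiable (by simp)
  have hσi : ContDiff ℝ ∞ σ := hσ.of_le (by simp)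
  have hσ' : ContDiff ℝ ∞ (deriv σ) := (contDiff_infty_iff_deriv.mp hσi).2
  have hσ'diff : Differentiable ℝ (deriv σ) := hσ'.differentiable (by simp)
  -- σ' is antitone on [A, ∞)
  have hanti : AntitoneOn (deriv σ) (Set.Ici A) := by
    apply antitoneOn_of_deriv_nonpos (convex_Ici A) hσ'.continuous.continuousOn
      (hσ'diff.differentiableOn)
    intro x hx
    rw [interior_Ici] at hx
    exact hσ'' x (le_of_lt hx)
  -- σ' > 0 on [A, ∞)
  have hpos' : ∀ r ≥ A, 0 < deriv σ r := by
    intro r hr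
    by_contra hcon
    push_neg at hcon
    have hmono : AntitoneOn σ (Set.Ici r) := by
      apply antitoneOn_of_deriv_nonpos (convex_Ici r) hσ.continuous.continuousOn
        (hσdiff.differentiableOn)
      intro x hx
      rw [interior_Ici] at hx
      exact le_trans (hanti hr (hr.trans hx.le) hx.le) hcon
    obtain ⟨x, hx1, hx2⟩ :=
      ((hlim.eventually (eventually_gt_atTop (σ r))).and (eventually_ge_atTop r)).exists
    exact absurd (hmono (le_refl r : r ∈ Set.Ici r) hx2 hx2) (not_le.mpr hx1)
  refine ⟨fun r hr => ⟨hpos' r hr, hanti (le_refl A : A ∈ Set.Ici A) hr hr⟩, ?_⟩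
  intro lam hlam m hm
  set D : ℝ := deriv σ A with hD
  have hDpos : 0 < D := hpos' A le_rfl
  have hden : (0:ℝ) < (m : ℝ) * (D ^ 2 + 1) := by
    have : (2:ℝ) ≤ (m:ℝ) := by exact_mod_cast hm
    nlinarith
  set β : ℝ := min 1 (lam / ((m : ℝ) * (D ^ 2 + 1))) with hβdef
  have hβpos : 0 < β := lt_min one_pos (div_pos hlam hden)
  have hβ1 : β ≤ 1 := min_le_left _ _
  have hβlam : β * ((m : ℝ) * (D ^ 2 + 1)) ≤ lam := by
    have := min_le_right 1 (lam / ((m : ℝ) * (D ^ 2 + 1)))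
    rw [← hβdef] at this
    calc β * ((m : ℝ) * (D ^ 2 + 1)) ≤ (lam / ((m : ℝ) * (D ^ 2 + 1))) * ((m : ℝ) * (D ^ 2 + 1)) := by
          exact mul_le_mul_of_nonneg_right this hden.le
      _ = lam := by field_simp
  refine ⟨β, hβpos, ?_, ?_, ?_⟩
  · -- the differential inequality
    intro r hr
    have hrnn : (0:ℝ) ≤ r := hA.trans hr
    have hs : 0 < σ r := hσpos r hrnn
    set s : ℝ := σ r with hsdef
    set p : ℝ := deriv σ r with hpdef
    set q : ℝ := deriv (deriv σ) r with hqdef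
    have hp : 0 < p := hpos' r hr
    have hpD : p ≤ D := hanti (le_refl A : A ∈ Set.Ici A) hr hr
    have hq : q ≤ 0 := hσ'' r hr
    -- first derivative of h on a neighborhood of r
    have hU : IsOpen {x : ℝ | 0 < σ x} := isOpen_lt continuous_const hσ.continuous
    have hrU : r ∈ {x : ℝ | 0 < σ x} := hs
    have hev : deriv (fun s : ℝ => σ s ^ β)
        =ᶠ[nhds r] fun x => deriv σ x * β * σ x ^ (β - 1) := by
      filter_upwards [hU.mem_nhds hrU] with x hx
      exact (((hσdiff x).hasDerivAt).rpow_const (Or.inl (ne_of_gt hx))).deriv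
    have h1 : deriv (fun s : ℝ => σ s ^ β) r = p * β * s ^ (β - 1) :=
      (((hσdiff r).hasDerivAt).rpow_const (Or.inl (ne_of_gt hs))).deriv
    -- second derivative
    have hder2 : HasDerivAt (fun x => deriv σ x * β * σ x ^ (β - 1))
        ((q * β) * s ^ (β - 1) + (p * β) * (p * (β - 1) * s ^ (β - 1 - 1))) r := by
      exact (((hσ'diff r).hasDerivAt).mul_const β).mul
        (((hσdiff r).hasDerivAt).rpow_const (Or.inl (ne_of_gt hs)))
    have h2 : deriv (deriv (fun s : ℝ => σ s ^ β)) r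
        = (q * β) * s ^ (β - 1) + (p * β) * (p * (β - 1) * s ^ (β - 1 - 1)) := by
      rw [hev.deriv_eq]
      exact hder2.deriv
    rw [h1, h2]
    have hsub : β - 1 - 1 = β - 2 := by ring
    rw [hsub]
    set t : ℝ := s ^ β with htdef
    have ht : 0 < t := Real.rpow_pos_of_pos hs β
    have hs1 : s ^ (β - 1) = t / s := by
      rw [htdef, Real.rpow_sub hs, Real.rpow_one]
    have hs2 : s ^ (β - 2) = t / s ^ 2 := by
      rw [htdef, Real.rpow_sub hs, show (2:ℝ) = ((2:ℕ):ℝ) by norm_num, Real.rpow_natCast]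
    rw [hs1, hs2]
    clear_value t s p q β D
    have key : β * (β - 1) * p ^ 2 + β * s * q + ((m:ℝ) - 1) * β * p ^ 2 - lam ≤ 0 := by
      have hm2 : (2:ℝ) ≤ (m:ℝ) := by exact_mod_cast hm
      have h1' : β * (β - 1) * p ^ 2 ≤ 0 := by
        have hb1 : β - 1 ≤ 0 := by linarith
        have hb2 : (0:ℝ) ≤ β * p ^ 2 := by positivity
        nlinarith
      have h2' : β * s * q ≤ 0 := by
        have : 0 ≤ β * s := by positivity
        exact mul_nonpos_of_nonneg_of_nonpos this hq
      have h3' : ((m:ℝ) - 1) * β * p ^ 2 ≤ lam := by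
        have hp2 : p ^ 2 ≤ D ^ 2 + 1 := by nlinarith
        have e1 : ((m:ℝ) - 1) * β ≤ (m:ℝ) * β := by nlinarith
        have e2 : (((m:ℝ) - 1) * β) * p ^ 2 ≤ ((m:ℝ) * β) * (D ^ 2 + 1) :=
          mul_le_mul e1 hp2 (sq_nonneg p) (by positivity)
        have e3 : (m:ℝ) * β * (D ^ 2 + 1) = β * ((m:ℝ) * (D ^ 2 + 1)) := by ring
        linarith
      linarith
    have heq := barrier_field_aux s t p q β ((m:ℝ)) lam (ne_of_gt hs)
    calc (q * β) * (t / s) + (p * β) * (p * (β - 1) * (t / s ^ 2))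
        + ((m : ℝ) - 1) * (p / s) * (p * β * (t / s)) - (lam / s ^ 2) * t
        = (t / s ^ 2) * (β * (β - 1) * p ^ 2 + β * s * q + ((m:ℝ) - 1) * β * p ^ 2 - lam) := heq
      _ ≤ 0 := mul_nonpos_of_nonneg_of_nonpos (by positivity) key
  · intro r hr
    exact Real.rpow_pos_of_pos (hσpos r (hA.trans hr)) β
  · exact (tendsto_rpow_atTop hβpos).comp hlim
end

section
/- Let Ω ⊆ ℝ^n be a nonempty open set, η : Ω → ℝ continuously differentiable, c : Ω → ℝ continuous, and λ ∈ ℝ. Suppose v and φ are twice continuously differentiable on Ω, φ(x) > 0 for all x ∈ Ω, and the pointwise relations Δv + ⟨∇η, ∇v⟩ + c·v ≥ 0 and Δφ + ⟨∇η, ∇φ⟩ + c·φ = −λ·φ hold in Ω. Then, setting σ := v/φ, the pointwise differential inequality div(φ² e^η ∇σ) ≥ λ e^η σ φ² holds everywhere in Ω. -/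
open scoped RealInnerProductSpace

/-- The Euclidean divergence `div X = ∑ i ∂Xᵢ/∂xᵢ`. -/
noncomputable def divergence {n : ℕ}
    (X : EuclideanSpace ℝ (Fin n) → EuclideanSpace ℝ (Fin n))
    (x : EuclideanSpace ℝ (Fin n)) : ℝ :=
  ∑ i : Fin n, fderiv ℝ X x (EuclideanSpace.single i 1) i

/-!
Where `φ ≠ 0`, `φ² ∇(v/φ) = φ ∇v - v ∇φ`, so the field is `e^η (φ ∇v - v ∇φ)`. In its divergence
the cross terms `⟪∇φ, ∇v⟫` cancel, leaving `e^η (φ Lv - v Lφ)`: the zeroth-order terms `c v φ`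
cancel as well. Substituting `Lφ = -λ φ` gives `e^η φ Lv + λ e^η σ φ²`, and `e^η φ Lv ≥ 0`.
-/

open Filter Topology InnerProductSpace
open scoped Gradient

theorem hasFDerivAt_div {E : Type*} [NormedAddCommGroup E] [NormedSpace ℝ E] {v φ : E → ℝ}
    {y : E} (hv : DifferentiableAt ℝ v y) (hφ : DifferentiableAt ℝ φ y)
    (hy : φ y ≠ 0) :
    HasFDerivAt (fun z => v z / φ z)
      ((φ y ^ 2)⁻¹ • (φ y • fderiv ℝ v y - v y • fderiv ℝ φ y)) y := by
  have hinv : HasFDerivAt (fun z => (φ z)⁻¹) (-(φ y ^ 2)⁻¹ • fderiv ℝ φ y) y :=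
    (hasDerivAt_inv hy).comp_hasFDerivAt y hφ.hasFDerivAt
  simp only [div_eq_mul_inv]
  refine (hv.hasFDerivAt.mul hinv).congr_fderiv (ContinuousLinearMap.ext fun w => ?_)
  simp only [neg_smul, smul_neg, add_apply, neg_apply, smul_apply, smul_eq_mul, sub_apply]
  field_simp
  ring

section Gradient

variable {F : Type*} [NormedAddCommGroup F] [InnerProductSpace ℝ F] [CompleteSpace F]
  {v φ η : F → ℝ} {y : F}

theorem sq_smul_gradient_div (hv : DifferentiableAt ℝ v y) (hφ : DifferentiableAt ℝ φ y)
    (hy : φ y ≠ 0) :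
    φ y ^ 2 • ∇ (fun z => v z / φ z) y = φ y • ∇ v y - v y • ∇ φ y := by
  refine ext_inner_right ℝ fun w => ?_
  simp only [inner_smul_left, inner_sub_left, inner_gradient_left,
    (hasFDerivAt_div hv hφ hy).fderiv, Real.ringHom_apply, smul_apply, sub_apply, smul_eq_mul]
  field_simp

theorem gradient_exp_comp (hη : DifferentiableAt ℝ η y) :
    ∇ (fun z => Real.exp (η z)) y = Real.exp (η y) • ∇ η y := by
  refine ext_inner_right ℝ fun w => ?_
  simp [inner_smul_left, inner_gradient_left, fderiv_exp hη]

theorem ContDiffAt.differentiableAt_gradient {n : WithTop ℕ∞} (hv : ContDiffAt ℝ n v y)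
    (hn : 2 ≤ n) : DifferentiableAt ℝ (∇ v) y :=
  (toDual ℝ F).symm.differentiableAt.comp y
    ((hv.fderiv_right (m := 1) hn).differentiableAt one_ne_zero)

end Gradient

section Divergence

variable {n : ℕ} {X Y : EuclideanSpace ℝ (Fin n) → EuclideanSpace ℝ (Fin n)}
  {a u : EuclideanSpace ℝ (Fin n) → ℝ} {x : EuclideanSpace ℝ (Fin n)}

theorem gradient_apply_eq_fderiv_single (i : Fin n) :
    ∇ u x i = fderiv ℝ u x (EuclideanSpace.single i 1) := by
  rw [← inner_gradient_left, EuclideanSpace.inner_single_right]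
  simp

theorem Filter.EventuallyEq.divergence_eq (h : X =ᶠ[𝓝 x] Y) : divergence X x = divergence Y x := by
  simp only [divergence, h.fderiv_eq]

theorem divergence_sub (hX : DifferentiableAt ℝ X x) (hY : DifferentiableAt ℝ Y x) :
    divergence (fun y => X y - Y y) x = divergence X x - divergence Y x := by
  simp [divergence, fderiv_fun_sub hX hY, Finset.sum_sub_distrib]

theorem divergence_smul (ha : DifferentiableAt ℝ a x) (hX : DifferentiableAt ℝ X x) :
    divergence (fun y => a y • X y) x = a x * divergence X x + ⟪∇ a x, X x⟫ := by
  simp [divergence, fderiv_fun_smul ha hX, Finset.sum_add_distrib, Finset.mul_sum,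
    -inner_gradient_left, PiLp.inner_apply, gradient_apply_eq_fderiv_single, mul_comm]

theorem divergence_gradient (hu : DifferentiableAt ℝ (∇ u) x) :
    divergence (∇ u) x = laplacian u x := by
  refine Finset.sum_congr rfl fun i _ => ?_
  have hcoord : (fun y => ∇ u y i) = fun y => fderiv ℝ u y (EuclideanSpace.single i 1) :=
    funext fun y => gradient_apply_eq_fderiv_single i
  have hproj : HasFDerivAt (fun y => ∇ u y i)
      ((EuclideanSpace.proj i).comp (fderiv ℝ (∇ u) x)) x :=
    (EuclideanSpace.proj (𝕜 := ℝ) i).hasFDerivAt.comp x hu.hasFDerivAt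
  rw [← hcoord, hproj.fderiv]
  rfl

end Divergence

theorem divergence_sq_mul_exp_smul_gradient_div {n : ℕ} {v φ η : EuclideanSpace ℝ (Fin n) → ℝ}
    {x : EuclideanSpace ℝ (Fin n)}
    (hv : ∀ᶠ y in 𝓝 x, DifferentiableAt ℝ v y) (hφ : ∀ᶠ y in 𝓝 x, DifferentiableAt ℝ φ y)
    (hη : DifferentiableAt ℝ η x) (hv₂ : DifferentiableAt ℝ (∇ v) x)
    (hφ₂ : DifferentiableAt ℝ (∇ φ) x) (hφx : φ x ≠ 0) :
    divergence (fun y => (φ y ^ 2 * Real.exp (η y)) • ∇ (fun z => v z / φ z) y) x =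
      Real.exp (η x) * (φ x * (laplacian v x + ⟪∇ η x, ∇ v x⟫)
        - v x * (laplacian φ x + ⟪∇ η x, ∇ φ x⟫)) := by
  have hφne : ∀ᶠ y in 𝓝 x, φ y ≠ 0 := hφ.self_of_nhds.continuousAt.eventually_ne hφx
  have hfield : (fun y => (φ y ^ 2 * Real.exp (η y)) • ∇ (fun z => v z / φ z) y) =ᶠ[𝓝 x]
      fun y => Real.exp (η y) • (φ y • ∇ v y - v y • ∇ φ y) := by
    filter_upwards [hv, hφ, hφne] with y hvy hφy hy
    rw [mul_comm, mul_smul, sq_smul_gradient_div hvy hφy hy]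
  have hvd := hv.self_of_nhds
  have hφd := hφ.self_of_nhds
  rw [hfield.divergence_eq, divergence_smul hη.exp (by fun_prop),
    divergence_sub (by fun_prop) (by fun_prop), divergence_smul hφd hv₂,
    divergence_smul hvd hφ₂, divergence_gradient hv₂, divergence_gradient hφ₂,
    gradient_exp_comp hη]
  simp only [inner_sub_right, inner_smul_right, inner_smul_left, RCLike.conj_to_real,
    real_inner_comm (∇ v x) (∇ φ x)]
  ring

theorem divergence_inequality_subsolution_eigenfunction_general
    (n : ℕ) (Ω : Set (EuclideanSpace ℝ (Fin n)))
    (hΩopen : IsOpen Ω)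
    (η c : EuclideanSpace ℝ (Fin n) → ℝ)
    (hη : ContDiffOn ℝ 1 η Ω)
    (lam : ℝ)
    (v φ : EuclideanSpace ℝ (Fin n) → ℝ)
    (hv : ContDiffOn ℝ 2 v Ω) (hφ : ContDiffOn ℝ 2 φ Ω)
    (hφpos : ∀ x ∈ Ω, 0 < φ x)
    (hvsub : ∀ x ∈ Ω,
      0 ≤ laplacian v x + ⟪gradient η x, gradient v x⟫ + c x * v x)
    (hφeig : ∀ x ∈ Ω,
      laplacian φ x + ⟪gradient η x, gradient φ x⟫ + c x * φ x = -lam * φ x) :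
    ∀ x ∈ Ω,
      lam * Real.exp (η x) * (v x / φ x) * (φ x) ^ 2 ≤
        divergence
          (fun y => ((φ y) ^ 2 * Real.exp (η y)) • gradient (fun z => v z / φ z) y) x := by
  intro x hx
  have hΩ : Ω ∈ 𝓝 x := hΩopen.mem_nhds hx
  have hφx := hφpos x hx
  rw [divergence_sq_mul_exp_smul_gradient_div
    ((hv.differentiableOn two_ne_zero).eventually_differentiableAt hΩ)
    ((hφ.differentiableOn two_ne_zero).eventually_differentiableAt hΩ)
    ((hη.contDiffAt hΩ).differentiableAt one_ne_zero)
    ((hv.contDiffAt hΩ).differentiableAt_gradient le_rfl)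
    ((hφ.contDiffAt hΩ).differentiableAt_gradient le_rfl) hφx.ne']
  have hLφ : laplacian φ x + ⟪∇ η x, ∇ φ x⟫ = -lam * φ x - c x * φ x := by
    linarith [hφeig x hx]
  have hgap : Real.exp (η x) * (φ x * (laplacian v x + ⟪∇ η x, ∇ v x⟫)
        - v x * (laplacian φ x + ⟪∇ η x, ∇ φ x⟫))
        - lam * Real.exp (η x) * (v x / φ x) * φ x ^ 2 =
      Real.exp (η x) * φ x * (laplacian v x + ⟪∇ η x, ∇ v x⟫ + c x * v x) := by
    rw [hLφ]
    field_simp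
    ring
  linarith [mul_nonneg (mul_nonneg (Real.exp_pos (η x)).le hφx.le) (hvsub x hx)]

/-- Interior inequality relating a subsolution `v` of `L = Δ + ⟨∇η, ∇·⟩ + c` to a
principal eigenfunction `φ`: with `σ = v/φ` one has
`div(φ² e^η ∇σ) ≥ λ e^η σ φ²` in `Ω`. -/
theorem divergence_inequality_subsolution_eigenfunction
    (n : ℕ) (Ω : Set (EuclideanSpace ℝ (Fin n)))
    (hΩopen : IsOpen Ω) (hΩne : Ω.Nonempty)
    (η c : EuclideanSpace ℝ (Fin n) → ℝ)
    (hη : ContDiffOn ℝ 1 η Ω) (hc : ContinuousOn c Ω)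
    (lam : ℝ)
    (v φ : EuclideanSpace ℝ (Fin n) → ℝ)
    (hv : ContDiffOn ℝ 2 v Ω) (hφ : ContDiffOn ℝ 2 φ Ω)
    (hφpos : ∀ x ∈ Ω, 0 < φ x)
    (hvsub : ∀ x ∈ Ω,
      0 ≤ laplacian v x + ⟪gradient η x, gradient v x⟫ + c x * v x)
    (hφeig : ∀ x ∈ Ω,
      laplacian φ x + ⟪gradient η x, gradient φ x⟫ + c x * φ x = -lam * φ x) :
    ∀ x ∈ Ω,
      lam * Real.exp (η x) * (v x / φ x) * (φ x) ^ 2 ≤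
        divergence
          (fun y => ((φ y) ^ 2 * Real.exp (η y)) • gradient (fun z => v z / φ z) y) x :=
  divergence_inequality_subsolution_eigenfunction_general n Ω hΩopen η c hη lam v φ hv hφ hφpos
    hvsub hφeig
end
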